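/- Lemma 1: let η be an assignment that is individually rational, non-wasteful, within-category fair, and satisfies the over-and-above principle. Then the matching μ induced by η is stable with respect to the profile of over-and-above choice rules (C_s^OA)_{s∈S}: (1) every individual i weakly prefers μ(i) to being unassigned; (2) for every institution s, C_s^OA(μ(s)) = μ(s) (where C_s^OA(A) denotes the chosen set of individuals); and (3) there is no pair (i, s) with s P_i μ(i) and i ∈ C_s^OA(μ(s) ∪ {i}). -/

import Mathlib

open Finset

/- `α` : individuals, `σ` : institutions, `ρ` : reserve categories.
Merit at institution `s` is given by an injective score `score s : α → ℕ`
(higher score = higher merit, `i ≻_s j` iff `score s j < score s i`).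
Reported category membership is `τ : α → Option ρ` (`none` = general
category).  Preferences of individual `i` over `Option σ` (`none` = being
unassigned) are given by an injective utility `ui i : Option σ → ℕ`. -/
variable {α σ ρ : Type*} [Fintype α] [DecidableEq α]
  [Fintype σ] [DecidableEq σ] [Fintype ρ] [DecidableEq ρ]

/-- The top-`k` elements of `A` under score `f`: members of `A` with fewer
than `k` strictly higher-scored elements of `A` (all of `A` if `|A| ≤ k`). -/
def topk (k : ℕ) (f : α → ℕ) (A : Finset α) : Finset α :=
  A.filter fun i => (A.filter fun j => f i < f j).card < k

/-- Open-category selection of institution `s`'s over-and-above choice rule. -/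
def oaOpen (acc : σ → Finset α) (score : σ → α → ℕ) (qo : σ → ℕ)
    (s : σ) (A : Finset α) : Finset α :=
  topk (qo s) (score s) (A ∩ acc s)

/-- Category-`r` selection of institution `s`'s over-and-above choice rule. -/
def oaRes (acc : σ → Finset α) (score : σ → α → ℕ) (qo : σ → ℕ)
    (q : σ → ρ → ℕ) (τ : α → Option ρ) (s : σ) (r : ρ) (A : Finset α) :
    Finset α :=
  topk (q s r) (score s)
    (((A ∩ acc s) \ oaOpen acc score qo s A).filter fun i => τ i = some r)

/-- The set chosen by institution `s`'s over-and-above choice rule. -/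
def oaChosen (acc : σ → Finset α) (score : σ → α → ℕ) (qo : σ → ℕ)
    (q : σ → ρ → ℕ) (τ : α → Option ρ) (s : σ) (A : Finset α) : Finset α :=
  oaOpen acc score qo s A ∪
    Finset.univ.biUnion fun r => oaRes acc score qo q τ s r A

/-- An assignment: each individual gets `none` (unassigned) or a pair
`(s, c)` of an institution and a category (`c = none` is the open category),
such that reserved positions only go to individuals of the corresponding
reported category, all assigned individuals are acceptable at their
institution, and category capacities are respected. -/
def IsAssignment (acc : σ → Finset α) (qo : σ → ℕ) (q : σ → ρ → ℕ)
    (τ : α → Option ρ) (η : α → Option (σ × Option ρ)) : Prop :=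
  (∀ i s c, η i = some (s, c) → c = none ∨ c = τ i) ∧
  (∀ i s c, η i = some (s, c) → i ∈ acc s) ∧
  (∀ s, (Finset.univ.filter fun i => η i = some (s, none)).card ≤ qo s) ∧
  (∀ s r, (Finset.univ.filter fun i => η i = some (s, some r)).card ≤ q s r)

/-- The matching induced by an assignment: the institution of `i`, if any. -/
def mu (η : α → Option (σ × Option ρ)) (i : α) : Option σ :=
  (η i).map Prod.fst

/-- The set of individuals matched to institution `s`. -/
def muS (η : α → Option (σ × Option ρ)) (s : σ) : Finset α :=
  Finset.univ.filter fun i => (η i).map Prod.fst = some s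

/-- Individual rationality: everyone weakly prefers their assignment to
being unassigned. -/
def IndRational (ui : α → Option σ → ℕ) (η : α → Option (σ × Option ρ)) :
    Prop :=
  ∀ i, ui i none ≤ ui i (mu η i)

/-- Within-category fairness of an assignment: whenever `i` strictly prefers
`s` to their assignment, every open-category position at `s` is held by a
higher-merit individual and, if `i` has reported reserve category `r`, every
category-`r` position at `s` is held by a higher-merit individual. -/
def WithinCatFair (score : σ → α → ℕ) (τ : α → Option ρ)
    (ui : α → Option σ → ℕ) (η : α → Option (σ × Option ρ)) : Prop :=
  ∀ i s, ui i (mu η i) < ui i (some s) →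
    (∀ j, η j = some (s, none) → score s i < score s j) ∧
    (∀ r, τ i = some r → ∀ j, η j = some (s, some r) → score s i < score s j)

/-- Non-wastefulness of an assignment: whenever `i` strictly prefers `s` to
their assignment and is acceptable at `s`, all positions `i` is eligible for
at `s` are exhausted. -/
def NonWasteful (acc : σ → Finset α) (qo : σ → ℕ) (q : σ → ρ → ℕ)
    (τ : α → Option ρ) (ui : α → Option σ → ℕ)
    (η : α → Option (σ × Option ρ)) : Prop :=
  ∀ i s, ui i (mu η i) < ui i (some s) → i ∈ acc s →
    (Finset.univ.filter fun j => η j = some (s, none)).card = qo s ∧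
    (∀ r, τ i = some r →
      (Finset.univ.filter fun j => η j = some (s, some r)).card = q s r)

/-- The over-and-above principle for an assignment: at each institution, every
holder of an open-category position has higher merit than every holder of a
reserve-category position. -/
def OverAndAbove (score : σ → α → ℕ) (η : α → Option (σ × Option ρ)) : Prop :=
  ∀ s i j (r : ρ), η i = some (s, none) → η j = some (s, some r) →
    score s j < score s i

/-!
Under the over-and-above principle the open-category holders at `s` are the top of `μ(s)`, so the
open selection from `μ(s)` contains them, and whoever it skips is a category-`r` holder; these fit in
`q s r` seats, so `μ(s)` is chosen entirely. If `i` prefers `s`, non-wastefulness fills every seat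
`i` could take and within-category fairness puts all its holders above `i`. The open holders then
keep `i` out of the open category, and, outranking every reserve holder, they also keep those
holders out of it; the `q s r` category-`r` holders thus compete with `i` for category `r` and win.
-/

section topk

variable {β : Type*} {k : ℕ} {f : β → ℕ} {A B : Finset β} {i : β}

lemma mem_topk : i ∈ topk k f A ↔ i ∈ A ∧ #(A.filter fun j => f i < f j) < k :=
  mem_filter

lemma topk_subset : topk k f A ⊆ A :=
  filter_subset _ _

lemma mem_topk_of_card_le (hiA : i ∈ A) (hiB : i ∈ B) (hB : #B ≤ k)
    (habove : ∀ j ∈ A, f i < f j → j ∈ B) : i ∈ topk k f A := by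
  classical
  refine mem_topk.2 ⟨hiA, lt_of_lt_of_le ?_ hB⟩
  calc #(A.filter fun j => f i < f j)
      ≤ #(B.erase i) := card_le_card fun j hj => by
        obtain ⟨hjA, hij⟩ := mem_filter.1 hj
        exact mem_erase.2 ⟨ne_of_apply_ne f hij.ne', habove j hjA hij⟩
    _ < #B := card_erase_lt_of_mem hiB

lemma topk_eq_self (h : #A ≤ k) : topk k f A = A :=
  topk_subset.antisymm fun _ hi => mem_topk_of_card_le hi hi h fun _ hj _ => hj

lemma notMem_topk_of_le_card (hBA : B ⊆ A) (hB : k ≤ #B) (hbelow : ∀ j ∈ B, f i < f j) :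
    i ∉ topk k f A := fun hi =>
  (mem_topk.1 hi).2.not_ge <|
    hB.trans <| card_le_card fun j hj => mem_filter.2 ⟨hBA hj, hbelow j hj⟩

end topk

omit [Fintype α] [Fintype σ] [DecidableEq σ] in
lemma oaChosen_subset {acc : σ → Finset α} {score : σ → α → ℕ} {qo : σ → ℕ} {q : σ → ρ → ℕ}
    {τ : α → Option ρ} {s : σ} {A : Finset α} :
    oaChosen acc score qo q τ s A ⊆ A ∩ acc s :=
  union_subset topk_subset <| biUnion_subset.2 fun _ _ =>
    topk_subset.trans <| (filter_subset _ _).trans sdiff_subset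

def holders (η : α → Option (σ × Option ρ)) (s : σ) (c : Option ρ) : Finset α :=
  univ.filter fun j => η j = some (s, c)

section assignment

variable {acc : σ → Finset α} {score : σ → α → ℕ} {qo : σ → ℕ} {q : σ → ρ → ℕ}
  {τ : α → Option ρ} {ui : α → Option σ → ℕ} {η : α → Option (σ × Option ρ)}
  {A : Finset α} {i : α} {s : σ} {c : Option ρ}

omit [Fintype σ] [DecidableEq α] [Fintype ρ] in
lemma mem_holders : i ∈ holders η s c ↔ η i = some (s, c) := by
  simp [holders]

omit [Fintype σ] [DecidableEq α] [Fintype ρ] [DecidableEq ρ] in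
lemma mem_muS : i ∈ muS η s ↔ ∃ c, η i = some (s, c) := by
  simp [muS, Option.map_eq_some_iff]

omit [Fintype σ] [DecidableEq α] [Fintype ρ] in
lemma holders_subset_muS : holders η s c ⊆ muS η s :=
  fun _ hj => mem_muS.2 ⟨c, mem_holders.1 hj⟩

namespace IsAssignment

omit [Fintype σ] [DecidableEq α] [Fintype ρ] in
lemma muS_subset_acc (hη : IsAssignment acc qo q τ η) : muS η s ⊆ acc s := fun i hi => by
  obtain ⟨c, hc⟩ := mem_muS.1 hi
  exact hη.2.1 i s c hc

omit [Fintype σ] [DecidableEq α] [Fintype ρ] in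
lemma type_eq_of_eq_some (hη : IsAssignment acc qo q τ η) {r : ρ}
    (h : η i = some (s, some r)) : τ i = some r :=
  (hη.1 i s _ h).resolve_left (Option.some_ne_none r) |>.symm

omit [Fintype σ] [Fintype ρ] in
lemma holders_open_subset_oaOpen (hη : IsAssignment acc qo q τ η) (hOA : OverAndAbove score η) :
    holders η s none ⊆ oaOpen acc score qo s (muS η s) := fun j hj => by
  have hj' := mem_holders.1 hj
  rw [oaOpen, inter_eq_left.2 hη.muS_subset_acc]
  refine mem_topk_of_card_le (holders_subset_muS hj) hj (hη.2.2.1 s) fun k hk hjk => ?_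
  obtain ⟨_ | r, hk'⟩ := mem_muS.1 hk
  · exact mem_holders.2 hk'
  · exact absurd (hOA s j k r hj' hk') hjk.not_gt

omit [Fintype σ] [Fintype ρ] in
lemma exists_reserve_of_notMem_oaOpen (hη : IsAssignment acc qo q τ η)
    (hOA : OverAndAbove score η) (hi : i ∈ muS η s)
    (hio : i ∉ oaOpen acc score qo s (muS η s)) :
    ∃ r, τ i = some r ∧ η i = some (s, some r) := by
  obtain ⟨_ | r, hi'⟩ := mem_muS.1 hi
  · exact absurd (hη.holders_open_subset_oaOpen hOA (mem_holders.2 hi')) hio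
  · exact ⟨r, hη.type_eq_of_eq_some hi', hi'⟩

omit [Fintype σ] in
lemma oaChosen_muS (hη : IsAssignment acc qo q τ η) (hOA : OverAndAbove score η) :
    oaChosen acc score qo q τ s (muS η s) = muS η s := by
  refine Subset.antisymm (oaChosen_subset.trans inter_subset_left) fun i hi => ?_
  by_cases hio : i ∈ oaOpen acc score qo s (muS η s)
  · exact mem_union_left _ hio
  obtain ⟨r, hτ, -⟩ := hη.exists_reserve_of_notMem_oaOpen hOA hi hio
  have hleftover_reserved : (((muS η s ∩ acc s) \ oaOpen acc score qo s (muS η s)).filter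
      fun k => τ k = some r) ⊆ holders η s (some r) := fun k hk => by
    obtain ⟨hk, hτk⟩ := mem_filter.1 hk
    obtain ⟨hkmu, hko⟩ := mem_sdiff.1 hk
    obtain ⟨r', hτk', hk'⟩ :=
      hη.exists_reserve_of_notMem_oaOpen hOA (mem_inter.1 hkmu).1 hko
    rw [hτk, Option.some_inj] at hτk'
    exact mem_holders.2 (hτk' ▸ hk')
  refine mem_union_right _ <| mem_biUnion.2 ⟨r, mem_univ r, ?_⟩
  rw [oaRes, topk_eq_self ((card_le_card hleftover_reserved).trans (hη.2.2.2 s r))]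
  exact mem_filter.2 ⟨mem_sdiff.2 ⟨mem_inter.2 ⟨hi, hη.muS_subset_acc hi⟩, hio⟩, hτ⟩

omit [Fintype σ] in
lemma notMem_oaChosen_of_prefers (hη : IsAssignment acc qo q τ η)
    (hNW : NonWasteful acc qo q τ ui η) (hWCF : WithinCatFair score τ ui η)
    (hOA : OverAndAbove score η) (hpref : ui i (mu η i) < ui i (some s))
    (hA : muS η s ⊆ A) : i ∉ oaChosen acc score qo q τ s A := fun hi => by
  obtain ⟨hfull_open, hfull_res⟩ := hNW i s hpref (mem_inter.1 (oaChosen_subset hi)).2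
  obtain ⟨hbeat_open, hbeat_res⟩ := hWCF i s hpref
  have hheld : ∀ c, holders η s c ⊆ A ∩ acc s := fun c j hj =>
    mem_inter.2 ⟨hA (holders_subset_muS hj), hη.2.1 j s c (mem_holders.1 hj)⟩
  have hopen : ∀ j, (∀ k ∈ holders η s none, score s j < score s k) →
      j ∉ oaOpen acc score qo s A := fun j hj =>
    notMem_topk_of_le_card (hheld none) hfull_open.ge hj
  rcases mem_union.1 hi with hio | hir
  · exact hopen i (fun k hk => hbeat_open k (mem_holders.1 hk)) hio
  obtain ⟨r, -, hir⟩ := mem_biUnion.1 hir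
  have hτ : τ i = some r := (mem_filter.1 (topk_subset hir)).2
  refine notMem_topk_of_le_card (B := holders η s (some r)) (fun k hk => ?_) (hfull_res r hτ).ge
    (fun k hk => hbeat_res r hτ k (mem_holders.1 hk)) hir
  have hk' := mem_holders.1 hk
  exact mem_filter.2 ⟨mem_sdiff.2 ⟨hheld _ hk, hopen k fun j hj =>
    hOA s j k r (mem_holders.1 hj) hk'⟩, hη.type_eq_of_eq_some hk'⟩

end IsAssignment

end assignment

theorem lemma1_stability_general
    (acc : σ → Finset α) (score : σ → α → ℕ)
    (qo : σ → ℕ) (q : σ → ρ → ℕ) (τ : α → Option ρ)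
    (ui : α → Option σ → ℕ)
    (η : α → Option (σ × Option ρ))
    (hη : IsAssignment acc qo q τ η)
    (hIR : IndRational ui η)
    (hNW : NonWasteful acc qo q τ ui η)
    (hWCF : WithinCatFair score τ ui η)
    (hOA : OverAndAbove score η) :
    (∀ i, ui i none ≤ ui i (mu η i)) ∧
    (∀ s, oaChosen acc score qo q τ s (muS η s) = muS η s) ∧
    ¬ ∃ i s, ui i (mu η i) < ui i (some s) ∧
        i ∈ oaChosen acc score qo q τ s (insert i (muS η s)) :=
  ⟨hIR, fun _ => hη.oaChosen_muS hOA, fun ⟨_, _, hpref, hi⟩ =>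
    hη.notMem_oaChosen_of_prefers hNW hWCF hOA hpref (subset_insert _ _) hi⟩

/-- Lemma 1. If an assignment `η` is individually rational,
non-wasteful, within-category fair, and satisfies the over-and-above
principle, then the matching `μ` it induces is stable with respect to the
profile of over-and-above choice rules: (1) every individual weakly prefers
their match to being unassigned; (2) every institution chooses its matched set
from itself; (3) no individual strictly prefers an institution whose
over-and-above choice rule would select them from its matched set plus
themselves. -/
theorem lemma1_stability
    (acc : σ → Finset α) (score : σ → α → ℕ)
    (hscore : ∀ s, Function.Injective (score s))
    (qo : σ → ℕ) (q : σ → ρ → ℕ) (τ : α → Option ρ)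
    (ui : α → Option σ → ℕ) (hui : ∀ i, Function.Injective (ui i))
    (η : α → Option (σ × Option ρ))
    (hη : IsAssignment acc qo q τ η)
    (hIR : IndRational ui η)
    (hNW : NonWasteful acc qo q τ ui η)
    (hWCF : WithinCatFair score τ ui η)
    (hOA : OverAndAbove score η) :
    (∀ i, ui i none ≤ ui i (mu η i)) ∧
    (∀ s, oaChosen acc score qo q τ s (muS η s) = muS η s) ∧
    ¬ ∃ i s, ui i (mu η i) < ui i (some s) ∧
        i ∈ oaChosen acc score qo q τ s (insert i (muS η s)) :=
  lemma1_stability_general acc score qo q τ ui η hη hIR hNW hWCF hOA
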